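/- The common-knowledge induction rule RC1 is sound with respect to SNMs: let G ⊆ Ag be a finite group and φ, ψ be KBL formulas; if SN' ⊨ φ → E_G(ψ ∧ φ) holds for every social network model SN', then for every social network model SN with SN ⊨ φ one has SN ⊨ C_G ψ, i.e., SN ⊨ E^k_G ψ for every k ≥ 1. -/

import Mathlib

/-- KBL formulas: atomic predicates (predicate symbol applied to terms of the
finite domain, folded into the type `Pred`), connection atoms, action atoms,
negation, conjunction and knowledge modalities. -/
inductive Formula (Ag Pred Conn Act : Type) : Type
  | atom : Pred → Formula Ag Pred Conn Act
  | conn : Conn → Ag → Ag → Formula Ag Pred Conn Act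
  | act  : Act → Ag → Ag → Formula Ag Pred Conn Act
  | neg  : Formula Ag Pred Conn Act → Formula Ag Pred Conn Act
  | and  : Formula Ag Pred Conn Act → Formula Ag Pred Conn Act → Formula Ag Pred Conn Act
  | know : Ag → Formula Ag Pred Conn Act → Formula Ag Pred Conn Act
  deriving DecidableEq

variable {Ag Pred Conn Act : Type}

/-- Material implication, encoded classically. -/
def Formula.imp (φ ψ : Formula Ag Pred Conn Act) : Formula Ag Pred Conn Act :=
  Formula.neg (Formula.and φ (Formula.neg ψ))

/-- Propositional formulas, used to define substitution instances of
propositional tautologies (axiom A1). -/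
inductive PropForm : Type
  | var : ℕ → PropForm
  | neg : PropForm → PropForm
  | and : PropForm → PropForm → PropForm

def PropForm.eval (v : ℕ → Bool) : PropForm → Bool
  | .var n => v n
  | .neg p => !(p.eval v)
  | .and p q => p.eval v && q.eval v

/-- A propositional tautology. -/
def PropForm.Taut (p : PropForm) : Prop := ∀ v, p.eval v = true

def PropForm.subst (σ : ℕ → Formula Ag Pred Conn Act) : PropForm → Formula Ag Pred Conn Act
  | .var n => σ n
  | .neg p => Formula.neg (p.subst σ)
  | .and p q => Formula.and (p.subst σ) (q.subst σ)

/-- A KBL formula that is a substitution instance of a propositional tautology. -/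
def Formula.IsTautInstance (φ : Formula Ag Pred Conn Act) : Prop :=
  ∃ (p : PropForm) (σ : ℕ → Formula Ag Pred Conn Act), p.Taut ∧ p.subst σ = φ

/-- KD4-derivability `Γ ⊢ φ`: assumptions, propositional tautologies (A1),
distribution (A2), positive introspection (A4), consistency (D, with falsum
taken as a contradictory formula `φ ∧ ¬φ`), modus ponens (R1) and
necessitation from the empty set of assumptions (R2). -/
inductive Deriv : Set (Formula Ag Pred Conn Act) → Formula Ag Pred Conn Act → Prop
  | mem {Γ} {φ : Formula Ag Pred Conn Act} : φ ∈ Γ → Deriv Γ φ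
  | taut {Γ} {φ : Formula Ag Pred Conn Act} : φ.IsTautInstance → Deriv Γ φ
  | a2 (Γ) (i : Ag) (φ ψ : Formula Ag Pred Conn Act) :
      Deriv Γ (Formula.imp
        (Formula.and (Formula.know i φ) (Formula.know i (Formula.imp φ ψ)))
        (Formula.know i ψ))
  | a4 (Γ) (i : Ag) (φ : Formula Ag Pred Conn Act) :
      Deriv Γ (Formula.imp (Formula.know i φ) (Formula.know i (Formula.know i φ)))
  | dax (Γ) (i : Ag) (φ : Formula Ag Pred Conn Act) :
      Deriv Γ (Formula.neg (Formula.know i (Formula.and φ (Formula.neg φ))))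
  | mp {Γ} {φ ψ : Formula Ag Pred Conn Act} :
      Deriv Γ (Formula.imp φ ψ) → Deriv Γ φ → Deriv Γ ψ
  | nec (Γ) (i : Ag) {φ : Formula Ag Pred Conn Act} :
      Deriv (∅ : Set (Formula Ag Pred Conn Act)) φ → Deriv Γ (Formula.know i φ)

/-- A social network model: connection relations, permitted-action relations,
a finite knowledge base for every agent, and the environment's knowledge base
(the set of true atomic predicates). -/
structure SNM (Ag Pred Conn Act : Type) where
  conn : Conn → Ag → Ag → Prop
  act : Act → Ag → Ag → Prop
  KB : Ag → Finset (Formula Ag Pred Conn Act)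
  KBe : Finset Pred

/-- Satisfaction of a KBL formula in a social network model. -/
def SNM.Sat (SN : SNM Ag Pred Conn Act) : Formula Ag Pred Conn Act → Prop
  | .atom p => p ∈ SN.KBe
  | .conn m i j => SN.conn m i j
  | .act n i j => SN.act n i j
  | .neg φ => ¬ SN.Sat φ
  | .and φ ψ => SN.Sat φ ∧ SN.Sat ψ
  | .know i φ => Deriv (↑(SN.KB i) : Set (Formula Ag Pred Conn Act)) φ

/-- Knowledge consistency of the knowledge bases of an SNM. -/
def SNM.KnowConsistent (SN : SNM Ag Pred Conn Act) : Prop :=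
  ∀ (i : Ag) (φ : Formula Ag Pred Conn Act),
    Deriv (↑(SN.KB i) : Set (Formula Ag Pred Conn Act)) φ →
    ¬ Deriv (↑(SN.KB i) : Set (Formula Ag Pred Conn Act)) (Formula.neg φ)

/-- Self-awareness of the knowledge bases of an SNM. -/
def SNM.SelfAware (SN : SNM Ag Pred Conn Act) : Prop :=
  ∀ (i : Ag) (φ : Formula Ag Pred Conn Act),
    Deriv (↑(SN.KB i) : Set (Formula Ag Pred Conn Act)) φ →
    Deriv (↑(SN.KB i) : Set (Formula Ag Pred Conn Act)) (Formula.know i φ)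

/-- Conjunction of a nonempty list of formulas (head `a`, tail `l`). -/
def conjNE (a : Formula Ag Pred Conn Act) (l : List (Formula Ag Pred Conn Act)) :
    Formula Ag Pred Conn Act :=
  l.foldl Formula.and a

/-- The characteristic set `Φ_SN` of a social network model. -/
def SNM.CharSet (SN : SNM Ag Pred Conn Act) : Set (Formula Ag Pred Conn Act) :=
  {ψ | ∃ p ∈ SN.KBe, ψ = Formula.atom p} ∪
  {ψ | ∃ (i : Ag) (φ : Formula Ag Pred Conn Act), φ ∈ SN.KB i ∧ ψ = Formula.know i φ} ∪
  {ψ | ∃ (m : Conn) (i j : Ag), SN.conn m i j ∧ ψ = Formula.conn m i j} ∪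
  {ψ | ∃ (n : Act) (i j : Ag), SN.act n i j ∧ ψ = Formula.act n i j}

/-- A formula is KD4-consistent when its negation is not derivable from no
assumptions. -/
def KD4Consistent (φ : Formula Ag Pred Conn Act) : Prop :=
  ¬ Deriv (∅ : Set (Formula Ag Pred Conn Act)) (Formula.neg φ)

/-- A set of formulas is KD4-consistent when no contradiction is derivable from it. -/
def SetKD4Consistent (Γ : Set (Formula Ag Pred Conn Act)) : Prop :=
  ∀ ψ : Formula Ag Pred Conn Act, ¬ (Deriv Γ ψ ∧ Deriv Γ (Formula.neg ψ))

/-- Subformulas of a formula (including the formula itself). -/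
def Formula.sub : Formula Ag Pred Conn Act → Set (Formula Ag Pred Conn Act)
  | .atom p => {Formula.atom p}
  | .conn m i j => {Formula.conn m i j}
  | .act n i j => {Formula.act n i j}
  | .neg φ => insert (Formula.neg φ) φ.sub
  | .and φ ψ => insert (Formula.and φ ψ) (φ.sub ∪ ψ.sub)
  | .know i φ => insert (Formula.know i φ) φ.sub

/-- `Sub⁺(φ)`: subformulas of `φ` together with their negations. -/
def SubPlus (φ : Formula Ag Pred Conn Act) : Set (Formula Ag Pred Conn Act) :=
  φ.sub ∪ (Formula.neg '' φ.sub)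

/-- `Con(φ)` (named `ConKD4`): maximal KD4-consistent subsets of `Sub⁺(φ)`. -/
def ConKD4 (φ : Formula Ag Pred Conn Act) : Set (Set (Formula Ag Pred Conn Act)) :=
  {Θ | Θ ⊆ SubPlus φ ∧ SetKD4Consistent Θ ∧
    ∀ ψ ∈ SubPlus φ, ψ ∉ Θ → ¬ SetKD4Consistent (insert ψ Θ)}

/-- `Θ/K_i = {ψ | K_i ψ ∈ Θ}`. -/
def projK (i : Ag) (Θ : Set (Formula Ag Pred Conn Act)) : Set (Formula Ag Pred Conn Act) :=
  {ψ | Formula.know i ψ ∈ Θ}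

/-- Kripke models: states, a valuation assigning truth values of atomic
formulas at each state, and accessibility relations. -/
structure Kripke (Ag Pred Conn Act : Type) where
  State : Type
  val : State → Formula Ag Pred Conn Act → Prop
  acc : Ag → State → State → Prop

/-- The canonical Kripke model `M_φ` of a (KD4-consistent) formula `φ`. -/
def canonical (φ : Formula Ag Pred Conn Act) : Kripke Ag Pred Conn Act where
  State := {Θ : Set (Formula Ag Pred Conn Act) // Θ ∈ ConKD4 φ}
  val := fun s ψ => ψ ∈ s.1
  acc := fun i s t => projK i s.1 ⊆ projK i t.1 ∧ projK i s.1 ⊆ t.1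

/-- Satisfaction of a formula at a state of a Kripke model. -/
def KSat (M : Kripke Ag Pred Conn Act) : M.State → Formula Ag Pred Conn Act → Prop
  | s, .atom p => M.val s (Formula.atom p)
  | s, .conn m i j => M.val s (Formula.conn m i j)
  | s, .act n i j => M.val s (Formula.act n i j)
  | s, .neg ψ => ¬ KSat M s ψ
  | s, .and ψ χ => KSat M s ψ ∧ KSat M s χ
  | s, .know i ψ => ∀ t, M.acc i s t → KSat M t ψ

/-- Length (number of symbols) of a formula; atoms count as one symbol. -/
def Formula.len : Formula Ag Pred Conn Act → ℕ
  | .atom _ => 1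
  | .conn _ _ _ => 1
  | .act _ _ _ => 1
  | .neg φ => φ.len + 1
  | .and φ ψ => φ.len + ψ.len + 1
  | .know _ φ => φ.len + 1

/-- `outerK(φ)`: the subformulas of `φ` of the form `K_i ψ` that are not under
the scope of any knowledge modality. -/
def outerK : Formula Ag Pred Conn Act → List (Formula Ag Pred Conn Act)
  | .neg φ => outerK φ
  | .and φ ψ => outerK φ ++ outerK ψ
  | .know i φ => [Formula.know i φ]
  | .atom _ => []
  | .conn _ _ _ => []
  | .act _ _ _ => []

/-- The length of the conjunction of the formulas of a list: the lengths of
the conjuncts plus one symbol for each `∧`. -/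
def conjLen (l : List (Formula Ag Pred Conn Act)) : ℕ :=
  (l.map Formula.len).sum + (l.length - 1)

/-- `E_G φ`: everybody in the (nonempty) group `G = {a} ∪ l` knows `φ`,
as the conjunction `⋀_{i ∈ G} K_i φ`. -/
def EG {Ag Pred Conn Act : Type} (a : Ag) (l : List Ag)
    (φ : Formula Ag Pred Conn Act) : Formula Ag Pred Conn Act :=
  (l.map fun i => Formula.know i φ).foldl Formula.and (Formula.know a φ)

/-- `E^k_G φ`: `E⁰_G φ = φ` and `E^{k+1}_G φ = E_G (E^k_G φ)`. -/
def EGiter {Ag Pred Conn Act : Type} (a : Ag) (l : List Ag) :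
    ℕ → Formula Ag Pred Conn Act → Formula Ag Pred Conn Act
  | 0, φ => φ
  | k + 1, φ => EG a l (EGiter a l k φ)


/-! A formula valid in every SNM is KD4-provable: otherwise a maximal consistent subset `Θ` of
`Sub⁺(θ)` containing `¬θ` yields an SNM, with `KB_i = Θ/K_i`, in which exactly the subformulas
of `θ` lying in `Θ` are true, so `θ` fails there. Applied to the premise of RC1 this
gives `⊢ φ → E_G (ψ ∧ φ)`, hence the syntactic induction `⊢ χ → E_G χ` for `χ = ψ ∧ φ`, and every
agent of `G` who derives `χ` from their knowledge base derives every `E^m_G ψ` as well. -/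

def PropForm.imp (p q : PropForm) : PropForm := .neg (.and p (.neg q))

namespace Deriv

open PropForm

variable {Γ Δ : Set (Formula Ag Pred Conn Act)} {A B C : Formula Ag Pred Conn Act}

theorem of_taut (p : PropForm) (σ : ℕ → Formula Ag Pred Conn Act) (hp : p.Taut) :
    Deriv Γ (p.subst σ) :=
  .taut ⟨p, σ, hp, rfl⟩

theorem taut_imp_self : Deriv Γ (A.imp A) :=
  of_taut ((var 0).imp (var 0)) (fun _ => A) fun v => by
    simp only [PropForm.imp, eval]; cases v 0 <;> rfl

theorem taut_imp_intro : Deriv Γ (A.imp (B.imp A)) :=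
  of_taut ((var 0).imp ((var 1).imp (var 0))) (fun | 0 => A | _ => B) fun v => by
    simp only [PropForm.imp, eval]; cases v 0 <;> cases v 1 <;> rfl

theorem taut_imp_distrib : Deriv Γ ((A.imp (B.imp C)).imp ((A.imp B).imp (A.imp C))) :=
  of_taut (((var 0).imp ((var 1).imp (var 2))).imp
      (((var 0).imp (var 1)).imp ((var 0).imp (var 2))))
    (fun | 0 => A | 1 => B | _ => C) fun v => by
    simp only [PropForm.imp, eval]; cases v 0 <;> cases v 1 <;> cases v 2 <;> rfl

theorem taut_and_intro : Deriv Γ (A.imp (B.imp (A.and B))) :=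
  of_taut ((var 0).imp ((var 1).imp ((var 0).and (var 1)))) (fun | 0 => A | _ => B) fun v => by
    simp only [PropForm.imp, eval]; cases v 0 <;> cases v 1 <;> rfl

theorem taut_and_left : Deriv Γ ((A.and B).imp A) :=
  of_taut (((var 0).and (var 1)).imp (var 0)) (fun | 0 => A | _ => B) fun v => by
    simp only [PropForm.imp, eval]; cases v 0 <;> cases v 1 <;> rfl

theorem taut_and_right : Deriv Γ ((A.and B).imp B) :=
  of_taut (((var 0).and (var 1)).imp (var 1)) (fun | 0 => A | _ => B) fun v => by
    simp only [PropForm.imp, eval]; cases v 0 <;> cases v 1 <;> rfl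

theorem taut_not_not : Deriv Γ (A.neg.neg.imp A) :=
  of_taut ((var 0).neg.neg.imp (var 0)) (fun _ => A) fun v => by
    simp only [PropForm.imp, eval]; cases v 0 <;> rfl

theorem taut_neg_intro : Deriv Γ ((A.imp B).imp ((A.imp B.neg).imp A.neg)) :=
  of_taut (((var 0).imp (var 1)).imp (((var 0).imp (var 1).neg).imp (var 0).neg))
    (fun | 0 => A | _ => B) fun v => by
    simp only [PropForm.imp, eval]; cases v 0 <;> cases v 1 <;> rfl

theorem and_iff : Deriv Γ (A.and B) ↔ Deriv Γ A ∧ Deriv Γ B :=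
  ⟨fun h => ⟨.mp taut_and_left h, .mp taut_and_right h⟩,
    fun ⟨hA, hB⟩ => .mp (.mp taut_and_intro hA) hB⟩

theorem mono (h : Deriv Γ A) (hΓΔ : Γ ⊆ Δ) : Deriv Δ A := by
  induction h generalizing Δ with
  | mem hA => exact .mem (hΓΔ hA)
  | taut hA => exact .taut hA
  | a2 _ i φ ψ => exact .a2 _ i φ ψ
  | a4 _ i φ => exact .a4 _ i φ
  | dax _ i φ => exact .dax _ i φ
  | mp _ _ ih₁ ih₂ => exact .mp (ih₁ hΓΔ) (ih₂ hΓΔ)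
  | nec _ i h => exact .nec _ i h

theorem deduction (h : Deriv (insert A Γ) B) : Deriv Γ (A.imp B) := by
  generalize hΔ : insert A Γ = Δ at h
  induction h with
  | mem hB =>
    rw [← hΔ] at hB
    rcases hB with rfl | hB
    · exact taut_imp_self
    · exact .mp taut_imp_intro (.mem hB)
  | taut hB => exact .mp taut_imp_intro (.taut hB)
  | a2 _ i φ ψ => exact .mp taut_imp_intro (.a2 _ i φ ψ)
  | a4 _ i φ => exact .mp taut_imp_intro (.a4 _ i φ)
  | dax _ i φ => exact .mp taut_imp_intro (.dax _ i φ)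
  | mp _ _ ih₁ ih₂ => exact .mp (.mp taut_imp_distrib (ih₁ hΔ)) (ih₂ hΔ)
  | nec _ i h => exact .mp taut_imp_intro (.nec _ i h)

theorem imp_trans (hAB : Deriv Γ (A.imp B)) (hBC : Deriv Γ (B.imp C)) : Deriv Γ (A.imp C) := by
  have hΓ : Γ ⊆ insert A Γ := Set.subset_insert A Γ
  exact deduction (.mp (hBC.mono hΓ) (.mp (hAB.mono hΓ) (.mem (Set.mem_insert A Γ))))

theorem know_of_know_premises (i : Ag) (h : Deriv Δ A)
    (hΔ : ∀ γ ∈ Δ, Deriv Γ (.know i γ)) : Deriv Γ (.know i A) := by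
  induction h with
  | mem hA => exact hΔ _ hA
  | taut hA => exact .nec _ i (.taut hA)
  | a2 _ j φ ψ => exact .nec _ i (.a2 _ j φ ψ)
  | a4 _ j φ => exact .nec _ i (.a4 _ j φ)
  | dax _ j φ => exact .nec _ i (.dax _ j φ)
  | mp _ _ ih₁ ih₂ => exact .mp (.a2 _ i _ _) (and_iff.2 ⟨ih₂ hΔ, ih₁ hΔ⟩)
  | nec _ j h => exact .nec _ i (.nec _ j h)

theorem neg_of_not_consistent_insert (h : ¬ SetKD4Consistent (insert A Γ)) :
    Deriv Γ A.neg := by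
  simp only [SetKD4Consistent, not_forall, not_not] at h
  obtain ⟨B, hB, hnB⟩ := h
  exact .mp (.mp taut_neg_intro hB.deduction) hnB.deduction

end Deriv

theorem Formula.mem_sub_self (φ : Formula Ag Pred Conn Act) : φ ∈ φ.sub := by
  cases φ <;> simp [Formula.sub]

theorem Formula.sub_finite (φ : Formula Ag Pred Conn Act) : φ.sub.Finite := by
  induction φ <;> simp [Formula.sub, *]

theorem subPlus_finite (φ : Formula Ag Pred Conn Act) : (SubPlus φ).Finite :=
  φ.sub_finite.union (φ.sub_finite.image _)

theorem exists_mem_conKD4_superset {φ : Formula Ag Pred Conn Act}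
    {Γ : Set (Formula Ag Pred Conn Act)} (hΓ : Γ ⊆ SubPlus φ) (hc : SetKD4Consistent Γ) :
    ∃ Θ ∈ ConKD4 φ, Γ ⊆ Θ := by
  let F := {Θ | Γ ⊆ Θ ∧ Θ ⊆ SubPlus φ ∧ SetKD4Consistent Θ}
  have hF : F.Finite := (subPlus_finite φ).finite_subsets.subset fun _ h => h.2.1
  obtain ⟨Θ, ⟨hΓΘ, hΘ, hcΘ⟩, hmax⟩ := hF.exists_maximal ⟨Γ, subset_rfl, hΓ, hc⟩
  refine ⟨Θ, ⟨hΘ, hcΘ, fun ξ hξ hξΘ hcξ => hξΘ ?_⟩, hΓΘ⟩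
  have hins : insert ξ Θ ∈ F :=
    ⟨hΓΘ.trans (Set.subset_insert ξ Θ), Set.insert_subset hξ hΘ, hcξ⟩
  exact hmax hins (Set.subset_insert ξ Θ) (Set.mem_insert ξ Θ)

namespace ConKD4

variable {φ ξ A B : Formula Ag Pred Conn Act} {Θ : Set (Formula Ag Pred Conn Act)}

theorem finite (hΘ : Θ ∈ ConKD4 φ) : Θ.Finite :=
  (subPlus_finite φ).subset hΘ.1

theorem mem_of_deriv (hΘ : Θ ∈ ConKD4 φ) (hξ : ξ ∈ SubPlus φ) (h : Deriv Θ ξ) : ξ ∈ Θ := by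
  by_contra hξΘ
  exact hΘ.2.1 ξ ⟨h, Deriv.neg_of_not_consistent_insert (hΘ.2.2 ξ hξ hξΘ)⟩

theorem neg_mem_iff (hΘ : Θ ∈ ConKD4 φ) (hξ : ξ ∈ φ.sub) : ξ.neg ∈ Θ ↔ ξ ∉ Θ :=
  ⟨fun hn h => hΘ.2.1 ξ ⟨.mem h, .mem hn⟩, fun h => ConKD4.mem_of_deriv hΘ (Or.inr ⟨ξ, hξ, rfl⟩)
    (Deriv.neg_of_not_consistent_insert (hΘ.2.2 ξ (Or.inl hξ) h))⟩

theorem and_mem_iff (hΘ : Θ ∈ ConKD4 φ) (hA : A ∈ φ.sub) (hB : B ∈ φ.sub)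
    (hAB : A.and B ∈ φ.sub) : A.and B ∈ Θ ↔ A ∈ Θ ∧ B ∈ Θ := by
  constructor
  · intro h
    obtain ⟨hA', hB'⟩ := Deriv.and_iff.1 (.mem h)
    exact ⟨ConKD4.mem_of_deriv hΘ (Or.inl hA) hA', ConKD4.mem_of_deriv hΘ (Or.inl hB) hB'⟩
  · rintro ⟨hA', hB'⟩
    exact ConKD4.mem_of_deriv hΘ (Or.inl hAB) (Deriv.and_iff.2 ⟨.mem hA', .mem hB'⟩)

end ConKD4

noncomputable def SNM.ofFinite (Θ : Set (Formula Ag Pred Conn Act)) (hΘ : Θ.Finite) :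
    SNM Ag Pred Conn Act where
  conn m i j := Formula.conn m i j ∈ Θ
  act n i j := Formula.act n i j ∈ Θ
  KB i := (hΘ.preimage (f := Formula.know i) fun _ _ _ _ h => (Formula.know.inj h).2).toFinset
  KBe := (hΘ.preimage (f := Formula.atom) fun _ _ _ _ h => Formula.atom.inj h).toFinset

theorem SNM.sat_ofFinite_know {Θ : Set (Formula Ag Pred Conn Act)} (hΘ : Θ.Finite) (i : Ag)
    (β : Formula Ag Pred Conn Act) :
    (SNM.ofFinite Θ hΘ).Sat (.know i β) ↔ Deriv (projK i Θ) β := by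
  simp only [SNM.Sat, SNM.ofFinite, Set.Finite.coe_toFinset]
  rfl

theorem ConKD4.sat_ofFinite_iff {φ : Formula Ag Pred Conn Act}
    {Θ : Set (Formula Ag Pred Conn Act)} (hΘ : Θ ∈ ConKD4 φ) :
    ∀ ξ : Formula Ag Pred Conn Act, ξ.sub ⊆ φ.sub →
      ((SNM.ofFinite Θ (ConKD4.finite hΘ)).Sat ξ ↔ ξ ∈ Θ)
  | .atom _, _ => Set.Finite.mem_toFinset _
  | .conn _ _ _, _ => Iff.rfl
  | .act _ _ _, _ => Iff.rfl
  | .neg ξ, h => by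
    have hξ : ξ.sub ⊆ φ.sub := (Set.subset_insert _ _).trans h
    rw [ConKD4.neg_mem_iff hΘ (hξ ξ.mem_sub_self), ← sat_ofFinite_iff hΘ ξ hξ]
    rfl
  | .and A B, h => by
    have hA : A.sub ⊆ φ.sub := (Set.subset_union_left.trans (Set.subset_insert _ _)).trans h
    have hB : B.sub ⊆ φ.sub := (Set.subset_union_right.trans (Set.subset_insert _ _)).trans h
    rw [ConKD4.and_mem_iff hΘ (hA A.mem_sub_self) (hB B.mem_sub_self) (h (A.and B).mem_sub_self),
      ← sat_ofFinite_iff hΘ A hA, ← sat_ofFinite_iff hΘ B hB]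
    rfl
  | .know i β, h => (SNM.sat_ofFinite_know _ i β).trans
    ⟨fun hβ => ConKD4.mem_of_deriv hΘ (Or.inl (h (Formula.know i β).mem_sub_self))
        (hβ.know_of_know_premises i fun _ hγ => .mem hγ),
      fun hβ => .mem hβ⟩

theorem deriv_of_forall_sat {θ : Formula Ag Pred Conn Act}
    (h : ∀ SN : SNM Ag Pred Conn Act, SN.Sat θ) : Deriv ∅ θ := by
  by_contra hθ
  have hcons : SetKD4Consistent ({θ.neg} : Set (Formula Ag Pred Conn Act)) := by
    by_contra hc
    rw [Set.singleton_def] at hc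
    exact hθ (.mp Deriv.taut_not_not (Deriv.neg_of_not_consistent_insert hc))
  obtain ⟨Θ, hΘ, hθΘ⟩ := exists_mem_conKD4_superset
    (Set.singleton_subset_iff.2 (Or.inr ⟨θ, θ.mem_sub_self, rfl⟩)) hcons
  have hθ : θ ∉ Θ := (ConKD4.neg_mem_iff hΘ θ.mem_sub_self).1 (hθΘ rfl)
  exact hθ ((ConKD4.sat_ofFinite_iff hΘ θ subset_rfl).1 (h _))

theorem SNM.sat_imp (SN : SNM Ag Pred Conn Act) {A B : Formula Ag Pred Conn Act} :
    SN.Sat (A.imp B) ↔ (SN.Sat A → SN.Sat B) := by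
  simp only [Formula.imp, SNM.Sat]
  tauto

section EG

variable {P : Formula Ag Pred Conn Act → Prop}

theorem foldl_and_iff (hP : ∀ A B, P (A.and B) ↔ P A ∧ P B) :
    ∀ (L : List (Formula Ag Pred Conn Act)) (A : Formula Ag Pred Conn Act),
      P (L.foldl .and A) ↔ P A ∧ ∀ B ∈ L, P B
  | [], A => by simp
  | B :: L, A => by
    rw [List.foldl_cons, foldl_and_iff hP L, hP, List.forall_mem_cons, and_assoc]

theorem EG_iff (hP : ∀ A B, P (A.and B) ↔ P A ∧ P B) (a : Ag) (l : List Ag)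
    (δ : Formula Ag Pred Conn Act) : P (EG a l δ) ↔ ∀ i ∈ a :: l, P (.know i δ) := by
  rw [EG, foldl_and_iff hP, List.forall_mem_cons, List.forall_mem_map]

theorem SNM.sat_EG (SN : SNM Ag Pred Conn Act) (a : Ag) (l : List Ag)
    (δ : Formula Ag Pred Conn Act) :
    SN.Sat (EG a l δ) ↔ ∀ i ∈ a :: l, Deriv (↑(SN.KB i) : Set (Formula Ag Pred Conn Act)) δ :=
  EG_iff (fun _ _ => Iff.rfl) a l δ

theorem Deriv.EG_iff {Γ : Set (Formula Ag Pred Conn Act)} (a : Ag) (l : List Ag)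
    (δ : Formula Ag Pred Conn Act) : Deriv Γ (EG a l δ) ↔ ∀ i ∈ a :: l, Deriv Γ (.know i δ) :=
  _root_.EG_iff (fun _ _ => Deriv.and_iff) a l δ

end EG

theorem Deriv.EGiter_of_imp_EG {a : Ag} {l : List Ag} {χ ψ : Formula Ag Pred Conn Act}
    (hind : Deriv ∅ (χ.imp (EG a l χ))) (hψ : Deriv ∅ (χ.imp ψ)) :
    ∀ (m : ℕ) {Γ : Set (Formula Ag Pred Conn Act)}, Deriv Γ χ → Deriv Γ (EGiter a l m ψ)
  | 0, _, hχ => .mp (hψ.mono (Set.empty_subset _)) hχ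
  | m + 1, _, hχ => by
    have hEχ := (Deriv.EG_iff a l χ).1 (.mp (hind.mono (Set.empty_subset _)) hχ)
    refine (Deriv.EG_iff a l _).2 fun i hi => ?_
    exact (Deriv.EGiter_of_imp_EG hind hψ m (.mem rfl)).know_of_know_premises i
      fun _ hγ => hγ ▸ hEχ i hi

theorem ruleRC1_sound_general
    {Ag Pred Conn Act : Type} (a : Ag) (l : List Ag)
    (φ ψ : Formula Ag Pred Conn Act)
    (hprem : ∀ SN' : SNM Ag Pred Conn Act,
      SN'.Sat (Formula.imp φ (EG a l (Formula.and ψ φ)))) :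
    ∀ SN : SNM Ag Pred Conn Act, SN.Sat φ →
      ∀ k : ℕ, 1 ≤ k → SN.Sat (EGiter a l k ψ) := by
  intro SN hφ k hk
  obtain ⟨m, rfl⟩ : ∃ m, k = m + 1 := ⟨k - 1, by omega⟩
  have hind : Deriv ∅ ((ψ.and φ).imp (EG a l (ψ.and φ))) :=
    Deriv.imp_trans Deriv.taut_and_right (deriv_of_forall_sat hprem)
  have hE : SN.Sat (EG a l (ψ.and φ)) := SN.sat_imp.1 (hprem SN) hφ
  rw [SNM.sat_EG] at hE
  exact (SN.sat_EG a l _).2 fun i hi =>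
    Deriv.EGiter_of_imp_EG hind Deriv.taut_and_left m (hE i hi)

/-- soundness of the common-knowledge induction rule RC1 w.r.t.
SNMs: if `SN' ⊨ φ → E_G (ψ ∧ φ)` holds for every SNM `SN'`, then every SNM
satisfying `φ` satisfies `C_G ψ`, i.e. `E^k_G ψ` for every `k ≥ 1`. -/
theorem ruleRC1_sound
    {Ag Pred Conn Act : Type} (a : Ag) (l : List Ag) (hG : (a :: l).Nodup)
    (φ ψ : Formula Ag Pred Conn Act)
    (hprem : ∀ SN' : SNM Ag Pred Conn Act,
      SN'.Sat (Formula.imp φ (EG a l (Formula.and ψ φ)))) :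
    ∀ SN : SNM Ag Pred Conn Act, SN.Sat φ →
      ∀ k : ℕ, 1 ≤ k → SN.Sat (EGiter a l k ψ) :=
  ruleRC1_sound_general a l φ ψ hprem
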